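/- arXiv:2303.17362 — 2 statements merged into one kernel-verified Lean document; each statement's English description precedes it below -/
import Mathlib

section
/- Let 0 < C₀ < 1, 0 ≤ γ₁ ≤ 1/2, γ₂ ≥ 0, γ₃ ≥ 0, and set k₀ = √(1 − (1−C₀)²)/(1−C₀). Suppose that (1 + γ₁γ₂)/(√(1+γ₁²) · √(1+γ₂²+γ₃²)) ≤ 1 − C₀ and that γ₃ ≤ k₀/√2. Then (γ₁ − γ₂)² ≥ 3(1 − (1−C₀)²)/(16(1−C₀)²). -/
set_option maxHeartbeats 1000000 in
/-- Let `0 < C₀ < 1`, `0 ≤ γ₁ ≤ 1/2`, `γ₂, γ₃ ≥ 0`, and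
`k₀ = √(1-(1-C₀)²)/(1-C₀)`. If
`(1 + γ₁γ₂)/(√(1+γ₁²)·√(1+γ₂²+γ₃²)) ≤ 1 - C₀` and `γ₃ ≤ k₀/√2`, then
`(γ₁ - γ₂)² ≥ 3(1-(1-C₀)²)/(16(1-C₀)²)`. -/
theorem stmt6 (C₀ γ₁ γ₂ γ₃ : ℝ) (hC₀ : 0 < C₀) (hC₀' : C₀ < 1)
    (hγ₁ : 0 ≤ γ₁) (hγ₁' : γ₁ ≤ 1 / 2) (hγ₂ : 0 ≤ γ₂) (hγ₃ : 0 ≤ γ₃)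
    (k₀ : ℝ) (hk₀ : k₀ = Real.sqrt (1 - (1 - C₀) ^ 2) / (1 - C₀))
    (h : (1 + γ₁ * γ₂) / (Real.sqrt (1 + γ₁ ^ 2) * Real.sqrt (1 + γ₂ ^ 2 + γ₃ ^ 2))
      ≤ 1 - C₀)
    (h₃ : γ₃ ≤ k₀ / Real.sqrt 2) :
    3 * (1 - (1 - C₀) ^ 2) / (16 * (1 - C₀) ^ 2) ≤ (γ₁ - γ₂) ^ 2 := by
  set c := 1 - C₀ with hc
  clear_value c
  have hc0 : 0 < c := by linarith
  have hc1 : c < 1 := by linarith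
  have h1pos : (0:ℝ) < 1 + γ₁ ^ 2 := by positivity
  have h2pos : (0:ℝ) < 1 + γ₂ ^ 2 + γ₃ ^ 2 := by positivity
  have hs1 : 0 < Real.sqrt (1 + γ₁ ^ 2) := Real.sqrt_pos.mpr h1pos
  have hs2 : 0 < Real.sqrt (1 + γ₂ ^ 2 + γ₃ ^ 2) := Real.sqrt_pos.mpr h2pos
  -- from h: 1 + γ₁γ₂ ≤ c * √ * √
  have hA : 1 + γ₁ * γ₂ ≤ c * (Real.sqrt (1 + γ₁ ^ 2) * Real.sqrt (1 + γ₂ ^ 2 + γ₃ ^ 2)) := by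
    have := (div_le_iff₀ (by positivity)).mp h
    linarith [this]
  have hApos : 0 ≤ 1 + γ₁ * γ₂ := by positivity
  have hsq : (1 + γ₁ * γ₂) ^ 2 ≤ c ^ 2 * ((1 + γ₁ ^ 2) * (1 + γ₂ ^ 2 + γ₃ ^ 2)) := by
    have h2 := mul_self_le_mul_self hApos hA
    have e1 : Real.sqrt (1 + γ₁ ^ 2) * Real.sqrt (1 + γ₁ ^ 2) = 1 + γ₁ ^ 2 :=
      Real.mul_self_sqrt h1pos.le
    have e2 : Real.sqrt (1 + γ₂ ^ 2 + γ₃ ^ 2) * Real.sqrt (1 + γ₂ ^ 2 + γ₃ ^ 2)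
        = 1 + γ₂ ^ 2 + γ₃ ^ 2 := Real.mul_self_sqrt h2pos.le
    calc (1 + γ₁ * γ₂) ^ 2 = (1 + γ₁ * γ₂) * (1 + γ₁ * γ₂) := by ring
      _ ≤ c * (Real.sqrt (1 + γ₁ ^ 2) * Real.sqrt (1 + γ₂ ^ 2 + γ₃ ^ 2)) *
          (c * (Real.sqrt (1 + γ₁ ^ 2) * Real.sqrt (1 + γ₂ ^ 2 + γ₃ ^ 2))) := h2
      _ = c ^ 2 * ((Real.sqrt (1 + γ₁ ^ 2) * Real.sqrt (1 + γ₁ ^ 2)) *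
          (Real.sqrt (1 + γ₂ ^ 2 + γ₃ ^ 2) * Real.sqrt (1 + γ₂ ^ 2 + γ₃ ^ 2))) := by ring
      _ = c ^ 2 * ((1 + γ₁ ^ 2) * (1 + γ₂ ^ 2 + γ₃ ^ 2)) := by rw [e1, e2]
  -- from h₃: 2 c² γ₃² ≤ 1 - c²
  have hcsq : c ^ 2 < 1 := by nlinarith
  have hg3sq : 2 * c ^ 2 * γ₃ ^ 2 ≤ 1 - c ^ 2 := by
    have hk : k₀ = Real.sqrt (1 - c ^ 2) / c := hk₀
    have hs2pos : (0:ℝ) < Real.sqrt 2 := Real.sqrt_pos.mpr (by norm_num)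
    have h3' : γ₃ * Real.sqrt 2 ≤ Real.sqrt (1 - c ^ 2) / c := by
      have := (le_div_iff₀ hs2pos).mp (hk ▸ h₃)
      linarith
    have h3'' : γ₃ * Real.sqrt 2 * c ≤ Real.sqrt (1 - c ^ 2) := by
      have := (le_div_iff₀ hc0).mp h3'
      linarith
    have hnn : 0 ≤ γ₃ * Real.sqrt 2 * c := by positivity
    have h4 := mul_self_le_mul_self hnn h3''
    have e2 : Real.sqrt 2 * Real.sqrt 2 = 2 := Real.mul_self_sqrt (by norm_num)
    have e3 : Real.sqrt (1 - c ^ 2) * Real.sqrt (1 - c ^ 2) = 1 - c ^ 2 :=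
      Real.mul_self_sqrt (by nlinarith)
    nlinarith [h4, e2, e3]
  have hb : c ^ 2 * (1 + γ₁ ^ 2) * γ₃ ^ 2 ≤ 5 / 8 * (1 - c ^ 2) := by
    nlinarith [hg3sq, mul_nonneg (mul_nonneg (sq_nonneg c) (sq_nonneg γ₃))
      (show (0:ℝ) ≤ 1 / 4 - γ₁ ^ 2 by
        nlinarith [mul_nonneg (show (0:ℝ) ≤ 1 / 2 - γ₁ by linarith)
          (show (0:ℝ) ≤ 1 / 2 + γ₁ by linarith)])]
  have hone : 1 ≤ (1 + γ₁ * γ₂) ^ 2 := by nlinarith [mul_nonneg hγ₁ hγ₂]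
  have heq : c ^ 2 * ((1 + γ₁ ^ 2) * (1 + γ₂ ^ 2 + γ₃ ^ 2)) =
      c ^ 2 * (1 + γ₁ * γ₂) ^ 2 + c ^ 2 * (γ₁ - γ₂) ^ 2 + c ^ 2 * (1 + γ₁ ^ 2) * γ₃ ^ 2 := by
    ring
  have h5 : 1 - c ^ 2 ≤ (1 - c ^ 2) * (1 + γ₁ * γ₂) ^ 2 := by nlinarith [hone, hcsq]
  have h6 : (1 - c ^ 2) * (1 + γ₁ * γ₂) ^ 2 =
      (1 + γ₁ * γ₂) ^ 2 - c ^ 2 * (1 + γ₁ * γ₂) ^ 2 := by ring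
  rw [div_le_iff₀ (by positivity)]
  linarith [hsq, heq, hb, h5, h6]
end

section
/- Let n ≥ 3, 0 < C₀ < 1, 0 ≤ γ₁ ≤ 1/2, 0 ≤ γ₂ ≤ 1, 0 ≤ γ₃ ≤ 1, and set k₀ = √(1 − (1−C₀)²)/(1−C₀). Define the unit vectors ν₁ = −eₙ, ν₂ = (−eₙ + γ₁ e_{n−1})/√(1+γ₁²), ν₃ = (−eₙ + γ₂ e_{n−1} + γ₃ e_{n−2})/√(1+γ₂²+γ₃²) in ℝⁿ. If ν₁·ν₂ ≤ 1−C₀, ν₁·ν₃ ≤ 1−C₀ and ν₂·ν₃ ≤ 1−C₀, then either (γ₁ ≥ k₀ and γ₃ ≥ k₀/√2), or (γ₁ ≥ k₀, γ₂ ≥ k₀/√2 and |γ₁ − γ₂| ≥ √(3(1 − (1−C₀)²)/(16(1−C₀)²))). -/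
open Matrix

set_option maxHeartbeats 1000000 in
/-- With `k₀ = √(1-(1-C₀)²)/(1-C₀)`, if the three unit normals
`ν₁ = -eₙ`, `ν₂ = (-eₙ + γ₁ e_{n-1})/√(1+γ₁²)`,
`ν₃ = (-eₙ + γ₂ e_{n-1} + γ₃ e_{n-2})/√(1+γ₂²+γ₃²)` are pairwise at inner product
at most `1 - C₀`, then either (`γ₁ ≥ k₀` and `γ₃ ≥ k₀/√2`), or
(`γ₁ ≥ k₀`, `γ₂ ≥ k₀/√2` and `|γ₁ - γ₂| ≥ √(3(1-(1-C₀)²)/(16(1-C₀)²))`). -/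
theorem stmt7 (n : ℕ) (hn : 3 ≤ n) (C₀ γ₁ γ₂ γ₃ : ℝ) (hC₀ : 0 < C₀) (hC₀' : C₀ < 1)
    (hγ₁ : 0 ≤ γ₁) (hγ₁' : γ₁ ≤ 1 / 2) (hγ₂ : 0 ≤ γ₂) (hγ₂' : γ₂ ≤ 1)
    (hγ₃ : 0 ≤ γ₃) (hγ₃' : γ₃ ≤ 1)
    (k₀ : ℝ) (hk₀ : k₀ = Real.sqrt (1 - (1 - C₀) ^ 2) / (1 - C₀))
    (ν₁ ν₂ ν₃ : Fin n → ℝ)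
    (hν₁ : ν₁ = -(Pi.single (⟨n - 1, by omega⟩ : Fin n) (1 : ℝ) : Fin n → ℝ))
    (hν₂ : ν₂ = (1 / Real.sqrt (1 + γ₁ ^ 2)) •
      (-(Pi.single (⟨n - 1, by omega⟩ : Fin n) (1 : ℝ) : Fin n → ℝ) +
        γ₁ • (Pi.single (⟨n - 2, by omega⟩ : Fin n) (1 : ℝ) : Fin n → ℝ)))
    (hν₃ : ν₃ = (1 / Real.sqrt (1 + γ₂ ^ 2 + γ₃ ^ 2)) •
      (-(Pi.single (⟨n - 1, by omega⟩ : Fin n) (1 : ℝ) : Fin n → ℝ) +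
        γ₂ • (Pi.single (⟨n - 2, by omega⟩ : Fin n) (1 : ℝ) : Fin n → ℝ) +
        γ₃ • (Pi.single (⟨n - 3, by omega⟩ : Fin n) (1 : ℝ) : Fin n → ℝ)))
    (h12 : ν₁ ⬝ᵥ ν₂ ≤ 1 - C₀) (h13 : ν₁ ⬝ᵥ ν₃ ≤ 1 - C₀) (h23 : ν₂ ⬝ᵥ ν₃ ≤ 1 - C₀) :
    (k₀ ≤ γ₁ ∧ k₀ / Real.sqrt 2 ≤ γ₃) ∨
      (k₀ ≤ γ₁ ∧ k₀ / Real.sqrt 2 ≤ γ₂ ∧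
        Real.sqrt (3 * (1 - (1 - C₀) ^ 2) / (16 * (1 - C₀) ^ 2)) ≤ |γ₁ - γ₂|) := by
  have hd12 : (⟨n - 1, by omega⟩ : Fin n) ≠ ⟨n - 2, by omega⟩ := by
    simp [Fin.ext_iff]; omega
  have hd13 : (⟨n - 1, by omega⟩ : Fin n) ≠ ⟨n - 3, by omega⟩ := by
    simp [Fin.ext_iff]; omega
  have hd23 : (⟨n - 2, by omega⟩ : Fin n) ≠ ⟨n - 3, by omega⟩ := by
    simp [Fin.ext_iff]; omega
  have hc : (0:ℝ) < 1 - C₀ := by linarith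
  have h1c2 : (0:ℝ) < 1 - (1 - C₀) ^ 2 := by nlinarith
  have hS1 : 0 < Real.sqrt (1 + γ₁ ^ 2) := Real.sqrt_pos.2 (by positivity)
  have hS1sq : Real.sqrt (1 + γ₁ ^ 2) ^ 2 = 1 + γ₁ ^ 2 := Real.sq_sqrt (by positivity)
  have hS2 : 0 < Real.sqrt (1 + γ₂ ^ 2 + γ₃ ^ 2) := Real.sqrt_pos.2 (by positivity)
  have hS2sq : Real.sqrt (1 + γ₂ ^ 2 + γ₃ ^ 2) ^ 2 = 1 + γ₂ ^ 2 + γ₃ ^ 2 :=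
    Real.sq_sqrt (by positivity)
  have sqrt_le : ∀ x y : ℝ, 0 ≤ y → x ≤ y ^ 2 → Real.sqrt x ≤ y := by
    intro x y hy hxy
    calc Real.sqrt x ≤ Real.sqrt (y ^ 2) := Real.sqrt_le_sqrt hxy
      _ = y := Real.sqrt_sq hy
  -- dot product values
  have e12 : ν₁ ⬝ᵥ ν₂ = 1 / Real.sqrt (1 + γ₁ ^ 2) := by
    rw [hν₁, hν₂]
    simp [dotProduct_add, add_dotProduct, dotProduct_smul, smul_dotProduct,
      neg_dotProduct, dotProduct_neg, single_dotProduct, dotProduct_single,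
      Pi.single_eq_same, Pi.single_eq_of_ne hd12.symm, Pi.single_eq_of_ne hd13.symm,
      Pi.single_eq_of_ne hd23.symm, Pi.single_eq_of_ne hd12,
      Pi.single_eq_of_ne hd13, Pi.single_eq_of_ne hd23]
  have e13 : ν₁ ⬝ᵥ ν₃ = 1 / Real.sqrt (1 + γ₂ ^ 2 + γ₃ ^ 2) := by
    rw [hν₁, hν₃]
    simp [dotProduct_add, add_dotProduct, dotProduct_smul, smul_dotProduct,
      neg_dotProduct, dotProduct_neg, single_dotProduct, dotProduct_single,
      Pi.single_eq_same, Pi.single_eq_of_ne hd12.symm, Pi.single_eq_of_ne hd13.symm,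
      Pi.single_eq_of_ne hd23.symm, Pi.single_eq_of_ne hd12,
      Pi.single_eq_of_ne hd13, Pi.single_eq_of_ne hd23]
  have e23 : ν₂ ⬝ᵥ ν₃ =
      (1 + γ₁ * γ₂) / (Real.sqrt (1 + γ₁ ^ 2) * Real.sqrt (1 + γ₂ ^ 2 + γ₃ ^ 2)) := by
    rw [hν₂, hν₃]
    simp [dotProduct_add, add_dotProduct, dotProduct_smul, smul_dotProduct,
      neg_dotProduct, dotProduct_neg, single_dotProduct, dotProduct_single,
      Pi.single_eq_same, Pi.single_eq_of_ne hd12.symm, Pi.single_eq_of_ne hd13.symm,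
      Pi.single_eq_of_ne hd23.symm, Pi.single_eq_of_ne hd12,
      Pi.single_eq_of_ne hd13, Pi.single_eq_of_ne hd23]
    ring
  rw [e12, div_le_iff₀ hS1] at h12
  rw [e13, div_le_iff₀ hS2] at h13
  rw [e23, div_le_iff₀ (by positivity)] at h23
  clear hν₁ hν₂ hν₃ e12 e13 e23 hd12 hd13 hd23
  clear ν₁ ν₂ ν₃
  -- squared inequalities
  have q1 : 1 ≤ (1 - C₀) ^ 2 * (1 + γ₁ ^ 2) := by nlinarith
  have q2 : 1 ≤ (1 - C₀) ^ 2 * (1 + γ₂ ^ 2 + γ₃ ^ 2) := by nlinarith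
  have q3 : (1 + γ₁ * γ₂) ^ 2 ≤ (1 - C₀) ^ 2 * ((1 + γ₁ ^ 2) * (1 + γ₂ ^ 2 + γ₃ ^ 2)) := by
    have h0 : (0:ℝ) ≤ 1 + γ₁ * γ₂ := by positivity
    have hsq := mul_self_le_mul_self h0 h23
    calc (1 + γ₁ * γ₂) ^ 2 = (1 + γ₁ * γ₂) * (1 + γ₁ * γ₂) := sq (1 + γ₁ * γ₂)
      _ ≤ ((1 - C₀) * (Real.sqrt (1 + γ₁ ^ 2) * Real.sqrt (1 + γ₂ ^ 2 + γ₃ ^ 2))) *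
          ((1 - C₀) * (Real.sqrt (1 + γ₁ ^ 2) * Real.sqrt (1 + γ₂ ^ 2 + γ₃ ^ 2))) := hsq
      _ = (1 - C₀) ^ 2 * (Real.sqrt (1 + γ₁ ^ 2) ^ 2 * Real.sqrt (1 + γ₂ ^ 2 + γ₃ ^ 2) ^ 2) := by
          ring
      _ = (1 - C₀) ^ 2 * ((1 + γ₁ ^ 2) * (1 + γ₂ ^ 2 + γ₃ ^ 2)) := by rw [hS1sq, hS2sq]
  have hγ1k : k₀ ≤ γ₁ := by
    rw [hk₀, div_le_iff₀ hc]
    exact sqrt_le _ _ (by positivity) (by nlinarith)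
  by_cases hcase : k₀ / Real.sqrt 2 ≤ γ₃
  · exact Or.inl ⟨hγ1k, hcase⟩
  · push_neg at hcase
    have hs2 : (0:ℝ) < Real.sqrt 2 := by positivity
    have hs2sq : Real.sqrt 2 ^ 2 = 2 := Real.sq_sqrt (by norm_num)
    have hk2 : k₀ ^ 2 = (1 - (1 - C₀) ^ 2) / (1 - C₀) ^ 2 := by
      rw [hk₀, div_pow, Real.sq_sqrt h1c2.le]
    -- γ₃² < k₀²/2
    have hg3sq : γ₃ ^ 2 < k₀ ^ 2 / 2 := by
      have : γ₃ ^ 2 < (k₀ / Real.sqrt 2) ^ 2 := by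
        apply sq_lt_sq' _ hcase
        have : 0 < k₀ / Real.sqrt 2 := lt_of_le_of_lt hγ₃ hcase
        linarith
      calc γ₃ ^ 2 < (k₀ / Real.sqrt 2) ^ 2 := this
        _ = k₀ ^ 2 / 2 := by rw [div_pow, hs2sq]
    have hk2' : k₀ ^ 2 * (1 - C₀) ^ 2 = 1 - (1 - C₀) ^ 2 := by
      rw [hk2]; field_simp
    have h3 : γ₃ ^ 2 * (1 - C₀) ^ 2 < (1 - (1 - C₀) ^ 2) / 2 := by
      have := mul_lt_mul_of_pos_right hg3sq (pow_pos hc 2)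
      linarith
    have hg2 : k₀ / Real.sqrt 2 ≤ γ₂ := by
      rw [div_le_iff₀ hs2, hk₀, div_le_iff₀ hc]
      apply sqrt_le _ _ (by positivity)
      have hexp : (γ₂ * Real.sqrt 2 * (1 - C₀)) ^ 2 = 2 * γ₂ ^ 2 * (1 - C₀) ^ 2 := by
        rw [mul_pow, mul_pow, hs2sq]; ring
      rw [hexp]
      nlinarith [q2, h3]
    refine Or.inr ⟨hγ1k, hg2, ?_⟩
    have hA : (1 + γ₁ ^ 2) * (γ₃ ^ 2 * (1 - C₀) ^ 2) ≤
        (1 + γ₁ ^ 2) * ((1 - (1 - C₀) ^ 2) / 2) :=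
      mul_le_mul_of_nonneg_left h3.le (by positivity)
    have hB : (1 + γ₁ ^ 2) * ((1 - (1 - C₀) ^ 2) / 2) ≤
        (5 / 4) * ((1 - (1 - C₀) ^ 2) / 2) :=
      mul_le_mul_of_nonneg_right (by nlinarith) (by positivity)
    have hC : (1:ℝ) ≤ (1 + γ₁ * γ₂) ^ 2 := by nlinarith [mul_nonneg hγ₁ hγ₂]
    have hD := mul_le_mul_of_nonneg_left hC h1c2.le
    have key0 : 3 * (1 - (1 - C₀) ^ 2) ≤ 16 * ((1 - C₀) ^ 2 * (γ₁ - γ₂) ^ 2) := by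
      nlinarith [q3, hA, hB, hD, sq_nonneg (γ₁ - γ₂), mul_nonneg (sq_nonneg (1 - C₀)) (sq_nonneg (γ₁ - γ₂))]
    have key : 3 * (1 - (1 - C₀) ^ 2) / (16 * (1 - C₀) ^ 2) ≤ (γ₁ - γ₂) ^ 2 := by
      rw [div_le_iff₀ (by positivity : (0:ℝ) < 16 * (1 - C₀) ^ 2)]
      nlinarith [key0]
    calc Real.sqrt (3 * (1 - (1 - C₀) ^ 2) / (16 * (1 - C₀) ^ 2))
        ≤ Real.sqrt ((γ₁ - γ₂) ^ 2) := Real.sqrt_le_sqrt key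
      _ = |γ₁ - γ₂| := Real.sqrt_sq_eq_abs _
end
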